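/- Let f, g : ℝⁿ → ℝ be differentiable with gradients Lipschitz with constants L_f and L_g respectively. Then ∇(f + C·g) is Lipschitz with constant L_f + C·L_g for any C ≥ 0. In particular, the smoothed C-SVM objective F_μ(w) = (1/2)‖w‖² + C·Σᵢ ℏ_μ(1 - yᵢXᵢw), whose gradient is w - C(YX)ᵀu, has a Lipschitz-continuous gradient with constant 1 + (Cn/μ)·maxᵢ(‖XᵢᵀXᵢ‖₂/‖Xᵢ‖_∞). -/

import Mathlib

/-!
Gradients and their Lipschitz bounds combine linearly. For the C-SVM objective,
`smoothedHinge a t` is the maximum of `u t - a u² / 2` over `u ∈ [0, 1]`, attained at the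
projection `c t` of `t / a` onto `[0, 1]`. Comparing the maximisers at `s` and `t` squeezes
`smoothedHinge a s - smoothedHinge a t - c t * (s - t)` between `0` and `(s - t)² / a`, so `c` is
the derivative; it is `1 / a`-Lipschitz, and by Cauchy–Schwarz the gradient `-(y c(1 - y⟪x, w⟫)) x`
of a sample term is then Lipschitz with constant `y² ‖x‖² / a`.
-/

open scoped RealInnerProductSpace
open Finset

noncomputable def smoothedHinge (a t : ℝ) : ℝ :=
  sSup ((fun u : ℝ => u * t - a / 2 * u ^ 2) '' Set.Icc (0 : ℝ) 1)

section Gradient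

variable {E : Type*} [NormedAddCommGroup E] [InnerProductSpace ℝ E] [CompleteSpace E]
  {f g : E → ℝ} {f' g' x : E}

theorem HasGradientAt.add_const_mul (hf : HasGradientAt f f' x) (hg : HasGradientAt g g' x)
    (C : ℝ) : HasGradientAt (fun w => f w + C * g w) (f' + C • g') x := by
  rw [hasGradientAt_iff_hasFDerivAt, map_add, map_smul]
  exact hf.hasFDerivAt.add (hg.hasFDerivAt.const_mul C)

theorem HasGradientAt.fun_sum {ι : Type*} (s : Finset ι) {f : ι → E → ℝ} {f' : ι → E}
    (h : ∀ i ∈ s, HasGradientAt (f i) (f' i) x) :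
    HasGradientAt (fun w => ∑ i ∈ s, f i w) (∑ i ∈ s, f' i) x := by
  rw [hasGradientAt_iff_hasFDerivAt, map_sum]
  exact HasFDerivAt.fun_sum fun i hi => (h i hi).hasFDerivAt

theorem HasDerivAt.comp_hasGradientAt {h : ℝ → ℝ} {h' : ℝ} (hh : HasDerivAt h h' (f x))
    (hf : HasGradientAt f f' x) : HasGradientAt (fun w => h (f w)) (h' • f') x := by
  rw [hasGradientAt_iff_hasFDerivAt, map_smul]
  exact hh.comp_hasFDerivAt x hf.hasFDerivAt

theorem hasGradientAt_inner_right (a x : E) : HasGradientAt (fun w => ⟪a, w⟫) a x :=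
  hasGradientAt_iff_hasFDerivAt.2 (innerSL ℝ a).hasFDerivAt

theorem hasGradientAt_half_norm_sq (x : E) : HasGradientAt (fun w => 1 / 2 * ‖w‖ ^ 2) x x := by
  rw [hasGradientAt_iff_hasFDerivAt]
  refine ((hasStrictFDerivAt_norm_sq x).hasFDerivAt.const_mul (1 / 2 : ℝ)).congr_fderiv ?_
  ext v
  simp

end Gradient

theorem hasDerivAt_of_norm_sub_sub_le_sq {𝕜 F : Type*} [NontriviallyNormedField 𝕜]
    [NormedAddCommGroup F] [NormedSpace 𝕜 F] {f : 𝕜 → F} {f' : F} {t : 𝕜} (K : ℝ)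
    (h : ∀ s, ‖f s - f t - (s - t) • f'‖ ≤ K * ‖s - t‖ ^ 2) : HasDerivAt f f' t := by
  rw [hasDerivAt_iff_isLittleO]
  refine (Asymptotics.IsBigO.of_bound K ?_).trans_isLittleO
    (Asymptotics.isLittleO_pow_sub_sub t one_lt_two)
  filter_upwards with s
  simpa using h s

/-- The projection of `t / a` onto `[0, 1]`: the maximiser in the definition of
`smoothedHinge a t`, and its derivative. -/
noncomputable def hingeSlope (a t : ℝ) : ℝ := min (max (t / a) 0) 1

section SmoothedHinge

variable {a : ℝ}

theorem hingeSlope_mem_Icc (a t : ℝ) : hingeSlope a t ∈ Set.Icc (0 : ℝ) 1 :=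
  ⟨le_min (le_max_right _ _) zero_le_one, min_le_right _ _⟩

theorem abs_hingeSlope_sub_le (ha : 0 < a) (s t : ℝ) :
    |hingeSlope a s - hingeSlope a t| ≤ |s - t| / a :=
  calc |hingeSlope a s - hingeSlope a t|
      ≤ |max (s / a) 0 - max (t / a) 0| := by
        simpa [hingeSlope] using abs_min_sub_min_le_max (max (s / a) 0) 1 (max (t / a) 0) 1
    _ ≤ |s / a - t / a| := abs_max_sub_max_le_abs _ _ _
    _ = |s - t| / a := by rw [div_sub_div_same, abs_div, abs_of_pos ha]

theorem hingeSlope_sub_mul_nonneg {v : ℝ} (hv : v ∈ Set.Icc (0 : ℝ) 1) (t : ℝ) :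
    0 ≤ (hingeSlope a t - v) * (t / a - hingeSlope a t) := by
  obtain ⟨hv0, hv1⟩ := hv
  unfold hingeSlope
  rcases le_total (t / a) 0 with h0 | h0
  · rw [max_eq_right h0, min_eq_left zero_le_one]; nlinarith
  rcases le_total (t / a) 1 with h1 | h1
  · rw [max_eq_left h0, min_eq_left h1]; simp
  · rw [max_eq_left h0, min_eq_right h1]; nlinarith

theorem isGreatest_smoothedHinge (ha : 0 < a) (t : ℝ) :
    IsGreatest ((fun u : ℝ => u * t - a / 2 * u ^ 2) '' Set.Icc (0 : ℝ) 1)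
      (hingeSlope a t * t - a / 2 * hingeSlope a t ^ 2) := by
  refine ⟨⟨_, hingeSlope_mem_Icc a t, rfl⟩, ?_⟩
  rintro _ ⟨v, hv, rfl⟩
  have hproj := hingeSlope_sub_mul_nonneg (a := a) hv t
  set c := hingeSlope a t
  have gap : c * t - a / 2 * c ^ 2 - (v * t - a / 2 * v ^ 2)
      = a * ((c - v) * (t / a - c)) + a / 2 * (c - v) ^ 2 := by
    field_simp
    ring
  simp only
  linarith [mul_nonneg ha.le hproj, mul_nonneg ha.le (sq_nonneg (c - v))]

theorem smoothedHinge_eq (ha : 0 < a) (t : ℝ) :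
    smoothedHinge a t = hingeSlope a t * t - a / 2 * hingeSlope a t ^ 2 :=
  (isGreatest_smoothedHinge ha t).csSup_eq

theorem abs_smoothedHinge_sub_sub_le (ha : 0 < a) (s t : ℝ) :
    |smoothedHinge a s - smoothedHinge a t - (s - t) * hingeSlope a t| ≤ (s - t) ^ 2 / a := by
  have lower := (isGreatest_smoothedHinge ha s).2 ⟨_, hingeSlope_mem_Icc a t, rfl⟩
  have upper := (isGreatest_smoothedHinge ha t).2 ⟨_, hingeSlope_mem_Icc a s, rfl⟩
  have hlip : (hingeSlope a s - hingeSlope a t) * (s - t) ≤ (s - t) ^ 2 / a :=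
    calc (hingeSlope a s - hingeSlope a t) * (s - t)
        ≤ |hingeSlope a s - hingeSlope a t| * |s - t| := by rw [← abs_mul]; exact le_abs_self _
      _ ≤ |s - t| / a * |s - t| := by gcongr; exact abs_hingeSlope_sub_le ha s t
      _ = (s - t) ^ 2 / a := by rw [div_mul_eq_mul_div, ← sq, sq_abs]
  simp only at lower upper
  rw [smoothedHinge_eq ha, smoothedHinge_eq ha, abs_le]
  constructor <;> nlinarith [div_nonneg (sq_nonneg (s - t)) ha.le]

theorem hasDerivAt_smoothedHinge (ha : 0 < a) (t : ℝ) :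
    HasDerivAt (smoothedHinge a) (hingeSlope a t) t :=
  hasDerivAt_of_norm_sub_sub_le_sq a⁻¹ fun s => by
    simpa [div_eq_inv_mul] using abs_smoothedHinge_sub_sub_le ha s t

end SmoothedHinge

section SVM

variable {ι E : Type*} [Fintype ι] [NormedAddCommGroup E] [InnerProductSpace ℝ E]

/-- The gradient `w - C (YX)ᵀ u` of the smoothed C-SVM objective with sample vectors `x i`,
labels `y i` and smoothing widths `a i`. -/
noncomputable def svmGradient (C : ℝ) (a y : ι → ℝ) (x : ι → E) (w : E) : E :=
  w - C • ∑ i, (y i * hingeSlope (a i) (1 - y i * ⟪x i, w⟫)) • x i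

theorem hasGradientAt_smoothedHinge_margin [CompleteSpace E] {a : ℝ} (ha : 0 < a) (x : E)
    (y : ℝ) (w : E) :
    HasGradientAt (fun v => smoothedHinge a (1 - y * ⟪x, v⟫))
      (-((y * hingeSlope a (1 - y * ⟪x, w⟫)) • x)) w := by
  have hmargin : HasDerivAt (fun t => smoothedHinge a (1 - y * t))
      (hingeSlope a (1 - y * ⟪x, w⟫) * -(y * 1)) ⟪x, w⟫ :=
    (hasDerivAt_smoothedHinge ha _).comp _ (((hasDerivAt_id _).const_mul y).const_sub 1)
  convert hmargin.comp_hasGradientAt (hasGradientAt_inner_right x w) using 1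
  rw [← neg_smul]
  ring_nf

theorem hasGradientAt_svmObjective [CompleteSpace E] (C : ℝ) {a : ι → ℝ} (ha : ∀ i, 0 < a i)
    (y : ι → ℝ) (x : ι → E) (w : E) :
    HasGradientAt (fun w => 1 / 2 * ‖w‖ ^ 2 + C * ∑ i, smoothedHinge (a i) (1 - y i * ⟪x i, w⟫))
      (svmGradient C a y x w) w := by
  convert (hasGradientAt_half_norm_sq w).add_const_mul
    (HasGradientAt.fun_sum _ fun i _ => hasGradientAt_smoothedHinge_margin (ha i) (x i) (y i) w) C
    using 1
  simp only [svmGradient, sum_neg_distrib, smul_neg, sub_eq_add_neg]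

theorem norm_smul_hingeSlope_margin_sub_le {a : ℝ} (ha : 0 < a) (x : E) (y : ℝ) (w v : E) :
    ‖(y * hingeSlope a (1 - y * ⟪x, w⟫)) • x - (y * hingeSlope a (1 - y * ⟪x, v⟫)) • x‖
      ≤ y ^ 2 * ‖x‖ ^ 2 / a * ‖w - v‖ := by
  have hmargin : |(1 - y * ⟪x, w⟫) - (1 - y * ⟪x, v⟫)| ≤ |y| * (‖x‖ * ‖w - v‖) := by
    rw [show (1 - y * ⟪x, w⟫) - (1 - y * ⟪x, v⟫) = -(y * ⟪x, w - v⟫) by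
      rw [inner_sub_right]; ring, abs_neg, abs_mul]
    gcongr
    exact abs_real_inner_le_norm x (w - v)
  have hslope := (abs_hingeSlope_sub_le ha _ _).trans (div_le_div_of_nonneg_right hmargin ha.le)
  calc ‖(y * hingeSlope a (1 - y * ⟪x, w⟫)) • x - (y * hingeSlope a (1 - y * ⟪x, v⟫)) • x‖
      = |y| * |hingeSlope a (1 - y * ⟪x, w⟫) - hingeSlope a (1 - y * ⟪x, v⟫)| * ‖x‖ := by
        rw [← sub_smul, ← mul_sub, norm_smul, Real.norm_eq_abs, abs_mul]
    _ ≤ |y| * (|y| * (‖x‖ * ‖w - v‖) / a) * ‖x‖ := by gcongr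
    _ = y ^ 2 * ‖x‖ ^ 2 / a * ‖w - v‖ := by rw [← sq_abs y]; ring

theorem norm_svmGradient_sub_le (C : ℝ) {a : ι → ℝ} (ha : ∀ i, 0 < a i) (y : ι → ℝ)
    (x : ι → E) (w v : E) :
    ‖svmGradient C a y x w - svmGradient C a y x v‖
      ≤ (1 + |C| * ∑ i, y i ^ 2 * ‖x i‖ ^ 2 / a i) * ‖w - v‖ := by
  set S := fun w => ∑ i, (y i * hingeSlope (a i) (1 - y i * ⟪x i, w⟫)) • x i
  have hS : ‖S w - S v‖ ≤ (∑ i, y i ^ 2 * ‖x i‖ ^ 2 / a i) * ‖w - v‖ :=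
    calc ‖S w - S v‖
        ≤ ∑ i, ‖(y i * hingeSlope (a i) (1 - y i * ⟪x i, w⟫)) • x i
            - (y i * hingeSlope (a i) (1 - y i * ⟪x i, v⟫)) • x i‖ := by
          rw [← sum_sub_distrib]; exact norm_sum_le _ _
      _ ≤ ∑ i, y i ^ 2 * ‖x i‖ ^ 2 / a i * ‖w - v‖ :=
          sum_le_sum fun i _ => norm_smul_hingeSlope_margin_sub_le (ha i) (x i) (y i) w v
      _ = (∑ i, y i ^ 2 * ‖x i‖ ^ 2 / a i) * ‖w - v‖ := (sum_mul ..).symm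
  calc ‖svmGradient C a y x w - svmGradient C a y x v‖
      = ‖(w - v) - C • (S w - S v)‖ := by
        simp only [svmGradient, S, smul_sub]; abel_nf
    _ ≤ ‖w - v‖ + |C| * ‖S w - S v‖ := by
        rw [← Real.norm_eq_abs, ← norm_smul]; exact norm_sub_le _ _
    _ ≤ ‖w - v‖ + |C| * ((∑ i, y i ^ 2 * ‖x i‖ ^ 2 / a i) * ‖w - v‖) := by gcongr
    _ = (1 + |C| * ∑ i, y i ^ 2 * ‖x i‖ ^ 2 / a i) * ‖w - v‖ := by ring

end SVM

theorem norm_add_smul_sub_add_smul_le {E : Type*} [SeminormedAddCommGroup E] [NormedSpace ℝ E]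
    (C : ℝ) (a b a' b' : E) : ‖a + C • b - (a' + C • b')‖ ≤ ‖a - a'‖ + |C| * ‖b - b'‖ := by
  rw [add_sub_add_comm, ← smul_sub, ← Real.norm_eq_abs, ← norm_smul]
  exact norm_add_le _ _

theorem EuclideanSpace.iSup_abs_pos {ι : Type*} [Finite ι] {x : EuclideanSpace ℝ ι}
    (hx : x ≠ 0) : 0 < ⨆ j, |x j| := by
  obtain ⟨j, hj⟩ : ∃ j, x j ≠ 0 := by
    by_contra! h
    exact hx (by ext j; exact h j)
  exact (abs_pos.2 hj).trans_le (le_ciSup (f := fun j => |x j|) (Set.finite_range _).bddAbove j)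

theorem Fintype.sum_le_card_mul_ciSup {ι : Type*} [Fintype ι] (f : ι → ℝ) :
    ∑ i, f i ≤ Fintype.card ι * ⨆ i, f i := by
  simpa using sum_le_card_nsmul univ f _ fun i _ => le_ciSup (Set.finite_range f).bddAbove i

theorem sum_lipschitz_gradient_and_csvm_general {m : ℕ}
    (f g : EuclideanSpace ℝ (Fin m) → ℝ)
    (gf gg : EuclideanSpace ℝ (Fin m) → EuclideanSpace ℝ (Fin m))
    (hf : ∀ x, HasGradientAt f (gf x) x) (hg : ∀ x, HasGradientAt g (gg x) x)
    (Lf Lg : ℝ) (hLf : ∀ x y, ‖gf x - gf y‖ ≤ Lf * ‖x - y‖)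
    (hLg : ∀ x y, ‖gg x - gg y‖ ≤ Lg * ‖x - y‖)
    (C : ℝ) (hC : 0 ≤ C)
    (n p : ℕ)
    (X : Fin n → EuclideanSpace ℝ (Fin p)) (hX : ∀ i, X i ≠ 0)
    (y : Fin n → ℝ) (hy : ∀ i, y i = 1 ∨ y i = -1)
    (μ : ℝ) (hμ : 0 < μ)
    (u : Fin n → EuclideanSpace ℝ (Fin p) → ℝ)
    (hu : ∀ i w,
      u i w = min (max ((1 - y i * (inner ℝ (X i) w : ℝ)) / (μ * (⨆ j, |X i j|))) 0) 1)
    (gradF : EuclideanSpace ℝ (Fin p) → EuclideanSpace ℝ (Fin p))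
    (hgradF : ∀ w, gradF w = w - C • ∑ i, (y i * u i w) • X i) :
    ((∀ x, HasGradientAt (fun w => f w + C * g w) (gf x + C • gg x) x) ∧
      ∀ x y, ‖(gf x + C • gg x) - (gf y + C • gg y)‖ ≤ (Lf + C * Lg) * ‖x - y‖) ∧
    ((∀ w, HasGradientAt
        (fun w : EuclideanSpace ℝ (Fin p) =>
          (1 / 2) * ‖w‖ ^ 2 +
            C * ∑ i, smoothedHinge (μ * (⨆ j, |X i j|)) (1 - y i * (inner ℝ (X i) w : ℝ)))
        (gradF w) w) ∧
      ∀ w v, ‖gradF w - gradF v‖ ≤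
        (1 + C * n / μ * (⨆ i, ‖X i‖ ^ 2 / (⨆ j, |X i j|))) * ‖w - v‖) := by
  have ha : ∀ i, 0 < μ * ⨆ j, |X i j| := fun i => mul_pos hμ (EuclideanSpace.iSup_abs_pos (hX i))
  have hgradF' : gradF = svmGradient C (fun i => μ * ⨆ j, |X i j|) y X := by
    funext w
    simp only [hgradF, hu]
    rfl
  subst hgradF'
  refine ⟨⟨fun x => (hf x).add_const_mul (hg x) C, fun x x' => ?_⟩,
    ⟨hasGradientAt_svmObjective C ha y X, fun w v => ?_⟩⟩
  · calc _ ≤ ‖gf x - gf x'‖ + |C| * ‖gg x - gg x'‖ := norm_add_smul_sub_add_smul_le ..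
      _ ≤ Lf * ‖x - x'‖ + C * (Lg * ‖x - x'‖) := by
          rw [abs_of_nonneg hC]; gcongr; exacts [hLf x x', hLg x x']
      _ = (Lf + C * Lg) * ‖x - x'‖ := by ring
  · set M := ⨆ i, ‖X i‖ ^ 2 / ⨆ j, |X i j|
    have hy2 : ∀ i, y i ^ 2 = 1 := fun i => by rcases hy i with h | h <;> simp [h]
    have hsum : ∑ i, y i ^ 2 * ‖X i‖ ^ 2 / (μ * ⨆ j, |X i j|) ≤ n * M / μ :=
      calc _ = (∑ i, ‖X i‖ ^ 2 / ⨆ j, |X i j|) / μ := by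
            simp only [hy2, one_mul, sum_div, div_div, mul_comm μ]
        _ ≤ n * M / μ := by
            gcongr; simpa using Fintype.sum_le_card_mul_ciSup fun i => ‖X i‖ ^ 2 / ⨆ j, |X i j|
    calc _ ≤ _ := norm_svmGradient_sub_le C ha y X w v
      _ ≤ (1 + C * (n * M / μ)) * ‖w - v‖ := by rw [abs_of_nonneg hC]; gcongr
      _ = (1 + C * n / μ * M) * ‖w - v‖ := by ring

/-- Part 1: the gradient of `f + C·g` is Lipschitz with constant `L_f + C·L_g`.
Part 2: the smoothed C-SVM objective `F_μ(w) = ‖w‖²/2 + C Σᵢ ℏ_μ(1 - yᵢ⟨Xᵢ,w⟩)`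
has gradient `w - C (YX)ᵀ u` (with `uᵢ = clamp((1 - yᵢ⟨Xᵢ,w⟩)/(μ‖Xᵢ‖_∞), 0, 1)`),
which is Lipschitz with constant `1 + (C n/μ) maxᵢ ‖XᵢᵀXᵢ‖₂/‖Xᵢ‖_∞`, where
`‖XᵢᵀXᵢ‖₂ = ‖Xᵢ‖₂²`. -/
theorem sum_lipschitz_gradient_and_csvm {m : ℕ}
    (f g : EuclideanSpace ℝ (Fin m) → ℝ)
    (gf gg : EuclideanSpace ℝ (Fin m) → EuclideanSpace ℝ (Fin m))
    (hf : ∀ x, HasGradientAt f (gf x) x) (hg : ∀ x, HasGradientAt g (gg x) x)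
    (Lf Lg : ℝ) (hLf : ∀ x y, ‖gf x - gf y‖ ≤ Lf * ‖x - y‖)
    (hLg : ∀ x y, ‖gg x - gg y‖ ≤ Lg * ‖x - y‖)
    (C : ℝ) (hC : 0 ≤ C)
    (n p : ℕ) (hn : 0 < n)
    (X : Fin n → EuclideanSpace ℝ (Fin p)) (hX : ∀ i, X i ≠ 0)
    (y : Fin n → ℝ) (hy : ∀ i, y i = 1 ∨ y i = -1)
    (μ : ℝ) (hμ : 0 < μ)
    (u : Fin n → EuclideanSpace ℝ (Fin p) → ℝ)
    (hu : ∀ i w,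
      u i w = min (max ((1 - y i * (inner ℝ (X i) w : ℝ)) / (μ * (⨆ j, |X i j|))) 0) 1)
    (gradF : EuclideanSpace ℝ (Fin p) → EuclideanSpace ℝ (Fin p))
    (hgradF : ∀ w, gradF w = w - C • ∑ i, (y i * u i w) • X i) :
    ((∀ x, HasGradientAt (fun w => f w + C * g w) (gf x + C • gg x) x) ∧
      ∀ x y, ‖(gf x + C • gg x) - (gf y + C • gg y)‖ ≤ (Lf + C * Lg) * ‖x - y‖) ∧
    ((∀ w, HasGradientAt
        (fun w : EuclideanSpace ℝ (Fin p) =>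
          (1 / 2) * ‖w‖ ^ 2 +
            C * ∑ i, smoothedHinge (μ * (⨆ j, |X i j|)) (1 - y i * (inner ℝ (X i) w : ℝ)))
        (gradF w) w) ∧
      ∀ w v, ‖gradF w - gradF v‖ ≤
        (1 + C * n / μ * (⨆ i, ‖X i‖ ^ 2 / (⨆ j, |X i j|))) * ‖w - v‖) :=
  sum_lipschitz_gradient_and_csvm_general f g gf gg hf hg Lf Lg hLf hLg C hC n p X hX y hy μ hμ u hu
    gradF hgradF
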